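/- arXiv:1903.05391 — 3 statements merged into one kernel-verified Lean document; each statement's English description precedes it below -/
import Mathlib

section
/- Let α₁, ..., αₛ be real numbers with α_{s-j+1} = α_j for all j (symmetric composition), and let s_j = ∑_{ℓ=1}^{j-1} α_ℓ and s_j' = ∑_{ℓ=j+1}^{s} α_ℓ. Then ∑_{j=1}^{s} α_j^3 (s_j^2 + α_j s_j) = ∑_{j=1}^{s} α_j^3 (s_j'^2 + α_j s_j'). -/
lemma reindex_Icc (a b : ℕ) (s : ℕ) (f : ℕ → ℝ) (ha : 1 ≤ a) (ha' : a ≤ s) (hb : b ≤ s) :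
    ∑ j ∈ Finset.Icc a b, f j = ∑ j ∈ Finset.Icc (s - b + 1) (s - a + 1), f (s - j + 1) := by
  apply Finset.sum_nbij' (fun j => s - j + 1) (fun j => s - j + 1)
  · intro j hj
    simp only [Finset.mem_Icc] at *
    omega
  · intro j hj
    simp only [Finset.mem_Icc] at *
    omega
  · intro j hj
    simp only [Finset.mem_Icc] at hj
    omega
  · intro j hj
    simp only [Finset.mem_Icc] at hj
    omega
  · intro j hj
    simp only [Finset.mem_Icc] at hj
    congr 1
    omega

/-- For a symmetric (palindromic) composition, the fourth-order condition
is invariant under reversal of the coefficient sequence: the sum built from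
left partial sums `s_j = ∑_{ℓ<j} α_ℓ` equals the sum built from right partial
sums `s_j' = ∑_{ℓ>j} α_ℓ`. -/
theorem symmetric_fourth_order_condition_reversal_invariant
    (s : ℕ) (α : ℕ → ℝ)
    (hsym : ∀ j ∈ Finset.Icc 1 s, α (s - j + 1) = α j) :
    ∑ j ∈ Finset.Icc 1 s, α j ^ 3 *
        ((∑ l ∈ Finset.Icc 1 (j - 1), α l) ^ 2 +
          α j * ∑ l ∈ Finset.Icc 1 (j - 1), α l) =
    ∑ j ∈ Finset.Icc 1 s, α j ^ 3 *
        ((∑ l ∈ Finset.Icc (j + 1) s, α l) ^ 2 +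
          α j * ∑ l ∈ Finset.Icc (j + 1) s, α l) := by
  rcases Nat.eq_zero_or_pos s with rfl | hs
  · simp
  -- reindex the RHS with j ↦ s - j + 1
  have key : ∀ j ∈ Finset.Icc 1 s,
      ∑ l ∈ Finset.Icc (j + 1) s, α l = ∑ l ∈ Finset.Icc 1 (s - j), α l := by
    intro j hj
    simp only [Finset.mem_Icc] at hj
    rcases Nat.eq_or_lt_of_le hj.2 with rfl | hlt
    · simp
    have h1 : ∑ l ∈ Finset.Icc (j+1) s, α l
        = ∑ l ∈ Finset.Icc (s - s + 1) (s - (j+1) + 1), α (s - l + 1) :=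
      reindex_Icc (j+1) s s α (by omega) (by omega) le_rfl
    rw [h1]
    have h2 : s - s + 1 = 1 := by omega
    have h3 : s - (j+1) + 1 = s - j := by omega
    rw [h2, h3]
    apply Finset.sum_congr rfl
    intro l hl
    simp only [Finset.mem_Icc] at hl
    exact hsym l (Finset.mem_Icc.mpr ⟨hl.1, by omega⟩)
  have hL := reindex_Icc 1 s s (fun j => α j ^ 3 *
        ((∑ l ∈ Finset.Icc 1 (j - 1), α l) ^ 2 +
          α j * ∑ l ∈ Finset.Icc 1 (j - 1), α l)) le_rfl hs le_rfl
  have h2 : s - s + 1 = 1 := by omega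
  have h3 : s - 1 + 1 = s := by omega
  rw [h2, h3] at hL
  rw [hL]
  apply Finset.sum_congr rfl
  intro j hj
  simp only [Finset.mem_Icc] at hj
  have h4 : s - j + 1 - 1 = s - j := by omega
  rw [h4, hsym j (Finset.mem_Icc.mpr hj), key j (Finset.mem_Icc.mpr hj)]
end

section
/- Let α₁,...,α₅ satisfy α₅ = α₁, α₄ = α₂, ∑ α_j = 1, ∑ α_j³ = 0, with g_k = ∑_{j≤k} α_j and g₁(g₁-1) ≠ g₂(g₂-1). Then the weights w₁ = w₄ = g₂(1-g₂)/(g₁(g₁-1)-g₂(g₂-1)), w₂ = w₃ = 1 - w₁, w₀ = -1 additionally satisfy the third-order conditions ∑_{k=1}^{4} w_k g_k³ = 1 and ∑_{k=1}^{4} w_k (∑_{j=1}^{k} α_j³) = 0. -/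
/-- The third-order estimator weights for a 5-stage symmetric fourth-order
composition also satisfy the third-order conditions
`∑ w_k g_k³ = 1` and `∑ w_k (∑_{j≤k} αⱼ³) = 0`. -/
theorem five_stage_estimator_weights_third_order_conditions
    (α₁ α₂ α₃ α₄ α₅ : ℝ)
    (h5 : α₅ = α₁) (h4 : α₄ = α₂)
    (hsum : α₁ + α₂ + α₃ + α₄ + α₅ = 1)
    (hcube : α₁ ^ 3 + α₂ ^ 3 + α₃ ^ 3 + α₄ ^ 3 + α₅ ^ 3 = 0)
    (g₁ g₂ g₃ g₄ : ℝ)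
    (hg₁ : g₁ = α₁) (hg₂ : g₂ = α₁ + α₂) (hg₃ : g₃ = α₁ + α₂ + α₃)
    (hg₄ : g₄ = α₁ + α₂ + α₃ + α₄)
    (hden : g₁ * (g₁ - 1) ≠ g₂ * (g₂ - 1))
    (w₀ w₁ w₂ w₃ w₄ : ℝ)
    (hw₀ : w₀ = -1)
    (hw₁ : w₁ = g₂ * (1 - g₂) / (g₁ * (g₁ - 1) - g₂ * (g₂ - 1)))
    (hw₄ : w₄ = w₁) (hw₂ : w₂ = 1 - w₁) (hw₃ : w₃ = w₂) :
    w₁ * g₁ ^ 3 + w₂ * g₂ ^ 3 + w₃ * g₃ ^ 3 + w₄ * g₄ ^ 3 = 1 ∧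
    w₁ * α₁ ^ 3 + w₂ * (α₁ ^ 3 + α₂ ^ 3) + w₃ * (α₁ ^ 3 + α₂ ^ 3 + α₃ ^ 3) +
        w₄ * (α₁ ^ 3 + α₂ ^ 3 + α₃ ^ 3 + α₄ ^ 3) = 0 := by
  have hd : g₁ * (g₁ - 1) - g₂ * (g₂ - 1) ≠ 0 := sub_ne_zero.mpr hden
  have hα₃ : α₃ = 1 - 2 * α₁ - 2 * α₂ := by
    rw [h5, h4] at hsum; linarith
  rw [h5, h4, hα₃] at hcube
  rw [hg₁, hg₂] at hd
  subst hw₁ hw₄ hw₂ hw₃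
  rw [hg₁, hg₂, hg₃, hg₄, h4, hα₃]
  constructor
  · field_simp
    ring
  · field_simp
    linear_combination (α₂ - 2 * α₁ * α₂ - α₂ ^ 2) * hcube
end

section
/- In a graded associative algebra, write exp(Y(hα_k)) with Y(hα) = hαF + h³α³Y₃ + O(h⁵) for a symmetric second-order method, and consider the product Ψ(h) = ∏_{k=1}^{s} exp(Y(hα_k)). Then Ψ(h) = exp(hF + O(h³)) if and only if ∑_{k=1}^{s} α_k = 1, and given this, Ψ(h) = exp(hF + O(h⁴)) (order at least 3) if and only if additionally ∑_{k=1}^{s} α_k³ = 0. -/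
/-- Cauchy product (convolution) of coefficient sequences of formal power series. -/
def seriesConv {A : Type*} [Ring A] (p q : ℕ → A) : ℕ → A :=
  fun n => ∑ i ∈ Finset.range (n + 1), p i * q (n - i)

/-- Coefficients (up to order `h³`) of `exp(Y(hα)) = exp(hαF + h³α³Y₃ + O(h⁵))`,
the operator of a symmetric second-order method with step fraction `α`. -/
noncomputable def expSymm2 {A : Type*} [Ring A] [Algebra ℝ A] (F Y3 : A) (a : ℝ) : ℕ → A :=
  fun n =>
    if n = 0 then 1
    else if n = 1 then a • F
    else if n = 2 then (a ^ 2 / 2) • (F * F)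
    else if n = 3 then (a ^ 3 / 6) • (F * F * F) + a ^ 3 • Y3
    else 0

/-- Coefficients of the product `Ψ(h) = ∏ₖ exp(Y(hα_k))`, truncated at order `h³`. -/
noncomputable def compCoeff {A : Type*} [Ring A] [Algebra ℝ A] (F Y3 : A) (α : List ℝ) :
    ℕ → A :=
  α.foldr (fun a acc => seriesConv (expSymm2 F Y3 a) acc)
    (fun n => if n = 0 then 1 else 0)

lemma compCoeff_eval {A : Type*} [Ring A] [Algebra ℝ A] (F Y3 : A) (α : List ℝ) :
    compCoeff F Y3 α 0 = 1 ∧ compCoeff F Y3 α 1 = α.sum • F ∧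
    compCoeff F Y3 α 2 = (α.sum ^ 2 / 2) • (F * F) ∧
    compCoeff F Y3 α 3 = (α.sum ^ 3 / 6) • (F * F * F) + ((α.map fun x => x ^ 3).sum) • Y3 := by
  induction α with
  | nil => simp [compCoeff]
  | cons a l ih =>
    obtain ⟨h0, h1, h2, h3⟩ := ih
    refine ⟨?_, ?_, ?_, ?_⟩ <;>
    · show seriesConv (expSymm2 F Y3 a) (compCoeff F Y3 l) _ = _
      simp only [seriesConv, Finset.sum_range_succ, Finset.sum_range_one, expSymm2,
        h0, h1, h2, h3, List.sum_cons, List.map_cons]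
      norm_num
      try ((try simp only [mul_assoc]); module)

/-- In the free (graded) algebra generated by `F` (degree 1) and `Y₃` (degree 3),
the composition `Ψ(h) = ∏ₖ exp(Y(hα_k))` of symmetric second-order methods
satisfies `Ψ(h) = exp(hF + O(h³))` if and only if `∑ α_k = 1`, and given this,
`Ψ(h) = exp(hF + O(h⁴))` (order at least 3) if and only if `∑ α_k³ = 0`. -/
theorem composition_consistency_and_third_order_conditions (α : List ℝ) :
    let F : FreeAlgebra ℝ (Fin 2) := FreeAlgebra.ι ℝ 0
    let Y3 : FreeAlgebra ℝ (Fin 2) := FreeAlgebra.ι ℝ 1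
    ((compCoeff F Y3 α 1 = F ∧ compCoeff F Y3 α 2 = (1 / 2 : ℝ) • (F * F)) ↔
        α.sum = 1) ∧
    (α.sum = 1 →
      ((compCoeff F Y3 α 1 = F ∧ compCoeff F Y3 α 2 = (1 / 2 : ℝ) • (F * F) ∧
          compCoeff F Y3 α 3 = (1 / 6 : ℝ) • (F * F * F)) ↔
        (α.map fun x => x ^ 3).sum = 0)) := by
  intro F Y3
  obtain ⟨h0, h1, h2, h3⟩ := compCoeff_eval F Y3 α
  have hF : F ≠ 0 := FreeAlgebra.ι_ne_zero 0
  have hY : Y3 ≠ 0 := FreeAlgebra.ι_ne_zero 1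
  constructor
  · constructor
    · rintro ⟨c1, -⟩
      rw [h1] at c1
      exact smul_left_injective ℝ hF (by show α.sum • F = (1:ℝ) • F; rw [c1, one_smul])
    · intro hs
      refine ⟨by rw [h1, hs, one_smul], by rw [h2, hs]; norm_num⟩
  · intro hs
    constructor
    · rintro ⟨-, -, c3⟩
      rw [h3, hs, one_pow] at c3
      have h' : ((α.map fun x => x ^ 3).sum) • Y3 = 0 := by
        rwa [add_eq_left] at c3
      exact (smul_eq_zero.mp h').resolve_right hY
    · intro hc
      exact ⟨by rw [h1, hs, one_smul], by rw [h2, hs]; norm_num,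
        by rw [h3, hs, hc, one_pow, zero_smul, add_zero]⟩
end
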